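/- arXiv:2004.13386 — 9 statements merged into one kernel-verified Lean document; each statement's English description precedes it below -/
import Mathlib

section
/- For β ∈ (1,2), α ∈ [0, 2-β], and x ∈ (-α/(β-1), 0) ∪ (1, (1-α)/(β-1)), there exists m ∈ ℕ such that (T⁺_{β,α})^m(x) ∈ [0,1]. -/
noncomputable def Tplus (β α : ℝ) (x : ℝ) : ℝ :=
  if x < (1 - α) / β then β * x + α else β * x + α - 1

lemma Tplus_neg_case (β α : ℝ) (hβ : β ∈ Set.Ioo (1 : ℝ) 2)
    (hα : α ∈ Set.Icc (0 : ℝ) (2 - β)) :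
    ∀ n : ℕ, ∀ x : ℝ, -α / (β - 1) < x → x < 0 →
      α / (β - 1) ≤ β ^ n * (x + α / (β - 1)) →
      ∃ m : ℕ, (Tplus β α)^[m] x ∈ Set.Icc (0 : ℝ) 1 := by
  obtain ⟨hβ1, hβ2⟩ := hβ
  obtain ⟨hα0, hα1⟩ := hα
  have hb1 : 0 < β - 1 := by linarith
  intro n
  induction n with
  | zero =>
    intro x hx1 hx2 hcond
    simp only [pow_zero, one_mul] at hcond
    linarith
  | succ n ih =>
    intro x hx1 hx2 hcond
    have hbranch : x < (1 - α) / β := by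
      have h0 : 0 ≤ (1 - α) / β := div_nonneg (by linarith) (by linarith)
      linarith
    have hT : Tplus β α x = β * x + α := by
      rw [Tplus, if_pos hbranch]
    by_cases hTneg : Tplus β α x < 0
    · -- still negative, apply IH
      have h1 : -α / (β - 1) < Tplus β α x := by
        rw [hT, neg_div] at *
        have hc : α + α / (β - 1) = β * (α / (β - 1)) := by field_simp; ring
        nlinarith
      have h3 : α / (β - 1) ≤ β ^ n * (Tplus β α x + α / (β - 1)) := by
        rw [hT]
        have hkey : β * x + α + α / (β - 1) = β * (x + α / (β - 1)) := by
          field_simp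
          ring
        rw [hkey, ← mul_assoc, ← pow_succ]
        exact hcond
      obtain ⟨m, hm⟩ := ih (Tplus β α x) h1 hTneg h3
      exact ⟨m + 1, by rwa [Function.iterate_succ_apply]⟩
    · push_neg at hTneg
      refine ⟨1, ?_⟩
      simp only [Function.iterate_one]
      constructor
      · exact hTneg
      · rw [hT]; nlinarith

lemma Tplus_pos_case (β α : ℝ) (hβ : β ∈ Set.Ioo (1 : ℝ) 2)
    (hα : α ∈ Set.Icc (0 : ℝ) (2 - β)) :
    ∀ n : ℕ, ∀ x : ℝ, 1 < x → x < (1 - α) / (β - 1) →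
      (1 - α) / (β - 1) ≤ β ^ n * ((1 - α) / (β - 1) - x) →
      ∃ m : ℕ, (Tplus β α)^[m] x ∈ Set.Icc (0 : ℝ) 1 := by
  obtain ⟨hβ1, hβ2⟩ := hβ
  obtain ⟨hα0, hα1⟩ := hα
  have hb1 : 0 < β - 1 := by linarith
  intro n
  induction n with
  | zero =>
    intro x hx1 hx2 hcond
    simp only [pow_zero, one_mul] at hcond
    linarith
  | succ n ih =>
    intro x hx1 hx2 hcond
    have hbranch : ¬ (x < (1 - α) / β) := by
      push_neg
      calc (1 - α) / β ≤ 1 := by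
            rw [div_le_one (by linarith)]; linarith
        _ ≤ x := hx1.le
    have hT : Tplus β α x = β * x + α - 1 := by
      rw [Tplus, if_neg hbranch]
    by_cases hTpos : 1 < Tplus β α x
    · have hr : (1 - α) / (β - 1) - Tplus β α x = β * ((1 - α) / (β - 1) - x) := by
        rw [hT]
        field_simp
        ring
      have h2 : Tplus β α x < (1 - α) / (β - 1) := by
        nlinarith [sub_pos.mpr hx2, hr]
      have h3 : (1 - α) / (β - 1) ≤ β ^ n * ((1 - α) / (β - 1) - Tplus β α x) := by
        rw [hr, ← mul_assoc, ← pow_succ]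
        exact hcond
      obtain ⟨m, hm⟩ := ih (Tplus β α x) hTpos h2 h3
      exact ⟨m + 1, by rwa [Function.iterate_succ_apply]⟩
    · push_neg at hTpos
      refine ⟨1, ?_⟩
      simp only [Function.iterate_one]
      refine ⟨?_, hTpos⟩
      rw [hT]; nlinarith

/-- Every point of the domain outside `[0,1]` eventually enters `[0,1]`. -/
theorem eventually_enters_unit_interval (β α : ℝ) (hβ : β ∈ Set.Ioo (1 : ℝ) 2)
    (hα : α ∈ Set.Icc (0 : ℝ) (2 - β)) (x : ℝ)
    (hx : x ∈ Set.Ioo (-α / (β - 1)) 0 ∪ Set.Ioo 1 ((1 - α) / (β - 1))) :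
    ∃ m : ℕ, (Tplus β α)^[m] x ∈ Set.Icc (0 : ℝ) 1 := by
  have hβ1 := hβ.1
  have hb1 : (0:ℝ) < β - 1 := by linarith
  rcases hx with ⟨hx1, hx2⟩ | ⟨hx1, hx2⟩
  · -- negative side
    have hd : 0 < x + α / (β - 1) := by
      rw [neg_div] at hx1; linarith
    obtain ⟨n, hn⟩ := pow_unbounded_of_one_lt ((α / (β - 1)) / (x + α / (β - 1))) hβ1
    refine Tplus_neg_case β α hβ hα n x hx1 hx2 ?_
    rw [div_lt_iff₀ hd] at hn
    linarith
  · -- positive side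
    have hd : 0 < (1 - α) / (β - 1) - x := by linarith
    obtain ⟨n, hn⟩ := pow_unbounded_of_one_lt (((1 - α) / (β - 1)) / ((1 - α) / (β - 1) - x)) hβ1
    refine Tplus_pos_case β α hβ hα n x hx1 hx2 ?_
    rw [div_lt_iff₀ hd] at hn
    linarith
end

section
/- Let m ≥ 2 be an integer, β = β_m the multinacci number of order m, and α ∈ (0, 2-β). With p = (1-α)/β, the first m+1 letters of the itinerary of p under T⁻_{β,α} are (0,1,1,...,1) (one 0 followed by m ones); that is, (T⁻_{β,α})^0(p) ≤ p and (T⁻_{β,α})^j(p) > p for all 1 ≤ j ≤ m. -/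
noncomputable def Tminus (β α : ℝ) (x : ℝ) : ℝ :=
  if x ≤ (1 - α) / β then β * x + α else β * x + α - 1

/-- For the multinacci number `β = β_m`, the first `m+1` letters of the lower
kneading invariant are `0 1 1 ⋯ 1`. -/
theorem lower_kneading_begins (m : ℕ) (hm : 2 ≤ m) (β α : ℝ)
    (hβ : β ∈ Set.Ioo (1 : ℝ) 2) (hmulti : β ^ m = ∑ i ∈ Finset.range m, β ^ i)
    (hα : α ∈ Set.Ioo (0 : ℝ) (2 - β)) :
    (Tminus β α)^[0] ((1 - α) / β) ≤ (1 - α) / β ∧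
      ∀ j, 1 ≤ j → j ≤ m → (Tminus β α)^[j] ((1 - α) / β) > (1 - α) / β := by
  obtain ⟨hβ1, hβ2⟩ := hβ
  obtain ⟨hα0, hα2⟩ := hα
  have hβ0 : (0:ℝ) < β := by linarith
  have hβ1' : (0:ℝ) < β - 1 := by linarith
  have hβne : β - 1 ≠ 0 := ne_of_gt hβ1'
  have hβne0 : β ≠ 0 := ne_of_gt hβ0
  -- key identity: β^(m+1) = 2 * β^m - 1
  have hgs : (∑ i ∈ Finset.range m, β ^ i) * (β - 1) = β ^ m - 1 := geom_sum_mul β m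
  have hkey : β ^ (m+1) = 2 * β ^ m - 1 := by
    have h1 : β ^ m * (β - 1) = β ^ m - 1 := by
      conv_lhs => rw [hmulti]
      exact hgs
    nlinarith [h1, pow_succ β m]
  have hmpow : (1:ℝ) < β ^ m := one_lt_pow₀ hβ1 (by omega)
  -- positivity of the numerators
  have pos : ∀ k, k ≤ m → 0 < β ^ k * (β + α - 2) + (1 - α) := by
    intro k hk
    have hle : β ^ k ≤ β ^ m := pow_le_pow_right₀ (le_of_lt hβ1) hk
    have h1 : 0 < β ^ m * (β + α - 2) + (1 - α) := by
      have : β ^ m * (β + α - 2) + (1 - α) = α * (β ^ m - 1) := by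
        have hpow : β ^ m * β = β ^ (m+1) := by ring
        nlinarith [hkey]
      rw [this]
      exact mul_pos hα0 (by linarith)
    nlinarith [mul_nonneg (sub_nonneg.2 hle) (by linarith : (0:ℝ) ≤ 2 - β - α)]
  set p := (1 - α) / β with hp
  -- the candidate values are > p when the next numerator is positive
  have gtp : ∀ k, k + 1 ≤ m → (β ^ k * (β + α - 2) + (1 - α)) / (β - 1) > p := by
    intro k hk
    rw [hp, gt_iff_lt, div_lt_div_iff₀ hβ0 hβ1']
    have := pos (k+1) hk
    nlinarith [this, pow_succ β k]
  -- iterate formula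
  have iter : ∀ j, j ≤ m → (Tminus β α)^[j+1] p =
      (β ^ j * (β + α - 2) + (1 - α)) / (β - 1) := by
    intro j hj
    induction j with
    | zero =>
      rw [zero_add, Function.iterate_one]
      show Tminus β α p = _
      unfold Tminus
      rw [hp, if_pos le_rfl]
      field_simp
      ring
    | succ n ih =>
      have hn : n ≤ m := by omega
      rw [Function.iterate_succ_apply', ih hn]
      have hy : (β ^ n * (β + α - 2) + (1 - α)) / (β - 1) > p := gtp n hj
      unfold Tminus
      rw [if_neg (not_le.2 hy)]
      field_simp
      ring
  refine ⟨by simp, ?_⟩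
  intro j hj1 hjm
  obtain ⟨k, rfl⟩ : ∃ k, j = k + 1 := ⟨j - 1, by omega⟩
  rw [iter k (by omega)]
  exact gtp k (by omega)
end

section
/- Let m ≥ 2 be an integer, β = β_m the multinacci number of order m, and α ∈ (0, 2-β). With p = (1-α)/β, the first m+1 letters of the itinerary of p under T⁺_{β,α} are (1,0,0,...,0) (one 1 followed by m zeros); that is, p ≥ p trivially gives first letter 1, and (T⁺_{β,α})^j(p) < p for all 1 ≤ j ≤ m. -/
open Finset

lemma Tplus_of_lt {β α x : ℝ} (hx : x < (1 - α) / β) : Tplus β α x = β * x + α :=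
  if_pos hx

lemma Tplus_self {β α : ℝ} (hβ : β ≠ 0) : Tplus β α ((1 - α) / β) = 0 := by
  rw [Tplus, if_neg (lt_irrefl _)]
  field_simp
  ring

lemma Tplus_iterate_zero {β α : ℝ} {n : ℕ}
    (h : ∀ k < n, α * ∑ i ∈ range k, β ^ i < (1 - α) / β) :
    (Tplus β α)^[n] 0 = α * ∑ i ∈ range n, β ^ i := by
  induction n with
  | zero => simp
  | succ n ih =>
    rw [Function.iterate_succ_apply', ih fun k hk => h k (by omega), Tplus_of_lt (h n n.lt_succ_self),
      geom_sum_succ]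
    ring

lemma mul_geom_sum_lt_div_of_lt_one {β α : ℝ} {k m : ℕ} (hβ : 0 < β) (hα : 0 ≤ α)
    (hsum : α * ∑ i ∈ range m, β ^ i < 1) (hk : k < m) :
    α * ∑ i ∈ range k, β ^ i < (1 - α) / β := by
  have hmono : ∑ i ∈ range (k + 1), β ^ i ≤ ∑ i ∈ range m, β ^ i :=
    sum_le_sum_of_subset_of_nonneg (range_subset_range.mpr hk) fun i _ _ => by positivity
  have hnext : α * ∑ i ∈ range (k + 1), β ^ i < 1 :=
    (mul_le_mul_of_nonneg_left hmono hα).trans_lt hsum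
  rw [lt_div_iff₀ hβ]
  rw [geom_sum_succ] at hnext
  linarith

lemma pow_mul_two_sub_eq_one_of_pow_eq_geom_sum {β : ℝ} {m : ℕ}
    (hmulti : β ^ m = ∑ i ∈ range m, β ^ i) : β ^ m * (2 - β) = 1 := by
  linear_combination (1 - β) * hmulti - geom_sum_mul β m

theorem upper_kneading_begins_general (m : ℕ) (β α : ℝ)
    (hβ : β ∈ Set.Ioo (1 : ℝ) 2) (hmulti : β ^ m = ∑ i ∈ Finset.range m, β ^ i)
    (hα : α ∈ Set.Ioo (0 : ℝ) (2 - β)) :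
    ¬ ((Tplus β α)^[0] ((1 - α) / β) < (1 - α) / β) ∧
      ∀ j, 1 ≤ j → j ≤ m → (Tplus β α)^[j] ((1 - α) / β) < (1 - α) / β := by
  have hβ0 : 0 < β := one_pos.trans hβ.1
  have hsum : α * ∑ i ∈ range m, β ^ i < 1 := by
    rw [← hmulti, ← pow_mul_two_sub_eq_one_of_pow_eq_geom_sum hmulti, mul_comm α]
    exact mul_lt_mul_of_pos_left hα.2 (pow_pos hβ0 m)
  have hbelow : ∀ k < m, α * ∑ i ∈ range k, β ^ i < (1 - α) / β := fun k hk =>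
    mul_geom_sum_lt_div_of_lt_one hβ0 hα.1.le hsum hk
  refine ⟨by simp, fun j hj hjm => ?_⟩
  obtain ⟨n, rfl⟩ := Nat.exists_eq_add_of_le' hj
  rw [Function.iterate_succ_apply, Tplus_self hβ0.ne',
    Tplus_iterate_zero fun k hk => hbelow k (by omega)]
  exact hbelow n (by omega)

/-- For the multinacci number `β = β_m`, the first `m+1` letters of the upper
kneading invariant are `1 0 0 ⋯ 0`. -/
theorem upper_kneading_begins (m : ℕ) (hm : 2 ≤ m) (β α : ℝ)
    (hβ : β ∈ Set.Ioo (1 : ℝ) 2) (hmulti : β ^ m = ∑ i ∈ Finset.range m, β ^ i)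
    (hα : α ∈ Set.Ioo (0 : ℝ) (2 - β)) :
    ¬ ((Tplus β α)^[0] ((1 - α) / β) < (1 - α) / β) ∧
      ∀ j, 1 ≤ j → j ≤ m → (Tplus β α)^[j] ((1 - α) / β) < (1 - α) / β :=
  upper_kneading_begins_general m β α hβ hmulti hα
end

section
/- Let m ≥ 2, β = β_m the multinacci number, α ∈ (0, 2-β), and p = (1-α)/β. Then (T⁺_{β,α})^{m+1}(p) = (T⁻_{β,α})^{m+1}(p) = α·β^m. -/
/-- For the multinacci number `β = β_m`, the `(m+1)`-st iterates of `p` under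
`T⁺` and `T⁻` agree and equal `α β^m`. -/
theorem iterates_of_p_agree (m : ℕ) (hm : 2 ≤ m) (β α : ℝ)
    (hβ : β ∈ Set.Ioo (1 : ℝ) 2) (hmulti : β ^ m = ∑ i ∈ Finset.range m, β ^ i)
    (hα : α ∈ Set.Ioo (0 : ℝ) (2 - β)) :
    (Tplus β α)^[m + 1] ((1 - α) / β) = α * β ^ m ∧
      (Tminus β α)^[m + 1] ((1 - α) / β) = α * β ^ m := by
  obtain ⟨hβ1, hβ2⟩ := hβ
  obtain ⟨hα0, hα2⟩ := hα
  have hβ0 : (0:ℝ) < β := by linarith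
  set S : ℕ → ℝ := fun k => ∑ i ∈ Finset.range k, β ^ i with hS
  have hSsucc : ∀ k, S (k+1) = β * S k + 1 := by
    intro k; simp only [hS]; rw [geom_sum_succ]
  have hSm : S m = β ^ m := hmulti.symm
  have hSnonneg : ∀ k, 0 ≤ S k := by
    intro k
    exact Finset.sum_nonneg fun i _ => pow_nonneg (le_of_lt hβ0) i
  have hSmono : ∀ n, n ≤ m → S n ≤ S m := by
    intro n hn
    exact Finset.sum_le_sum_of_subset_of_nonneg (Finset.range_subset_range.2 hn)
      (fun i _ _ => pow_nonneg (le_of_lt hβ0) i)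
  have hkey : β ^ (m+1) = 2 * β ^ m - 1 := by
    have h1 := hSsucc m
    have h2 : S (m+1) = S m + β ^ m := Finset.sum_range_succ _ m
    rw [hSm] at h1 h2
    rw [pow_succ]
    nlinarith [h1, h2]
  have hαβ : α * β ^ m < 1 := by
    have hp := pow_pos hβ0 m
    have hp1 := pow_pos hβ0 (m+1)
    nlinarith [hkey, pow_succ β m]
  have hC : ∀ n, n ≤ m → S n ≤ β ^ n := by
    have hCj : ∀ j, S (m - j) ≤ β ^ (m - j) := by
      intro j
      induction j with
      | zero => simpa [hSm] using le_refl (β ^ m)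
      | succ j ih =>
        rcases le_or_gt m (j+1) with h | h
        · have h0 : m - (j+1) = 0 := by omega
          rw [h0]; simp [hS]
        · have hn : m - j = (m - (j+1)) + 1 := by omega
          rw [hn, hSsucc (m - (j+1)), pow_succ] at ih
          nlinarith [ih, hSnonneg (m - (j+1)), pow_pos hβ0 (m - (j+1))]
    intro n hn
    have := hCj (m - n)
    rwa [Nat.sub_sub_self hn] at this
  have hA : ∀ k, k ≤ m → (Tplus β α)^[k] 0 = α * S k := by
    intro k
    induction k with
    | zero => intro _; simp [hS]
    | succ k ih =>
      intro hk
      have hk' : k ≤ m := by omega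
      rw [Function.iterate_succ_apply', ih hk']
      have hcond : α * S k < (1 - α) / β := by
        rw [lt_div_iff₀ hβ0]
        have h2 : S (k+1) ≤ S m := hSmono (k+1) hk
        have h1 : α * S (k+1) < 1 := by
          calc α * S (k+1) ≤ α * S m := by
                exact mul_le_mul_of_nonneg_left h2 (le_of_lt hα0)
            _ = α * β ^ m := by rw [hSm]
            _ < 1 := hαβ
        rw [hSsucc k] at h1
        nlinarith [h1]
      rw [Tplus, if_pos hcond, hSsucc k]; ring
  have hB : ∀ k, k ≤ m → (Tminus β α)^[k] 1 = β ^ k - (1 - α) * S k := by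
    intro k
    induction k with
    | zero => intro _; simp [hS]
    | succ k ih =>
      intro hk
      have hk' : k ≤ m := by omega
      rw [Function.iterate_succ_apply', ih hk']
      have hcond : ¬ (β ^ k - (1 - α) * S k ≤ (1 - α) / β) := by
        rw [not_le, div_lt_iff₀ hβ0]
        have h1 : S (k+1) ≤ β ^ (k+1) := hC (k+1) hk
        have h2 : (1:ℝ) ≤ S (k+1) := by
          rw [hSsucc k]; nlinarith [hSnonneg k]
        have h3 := hSsucc k
        have hps : β ^ (k+1) = β ^ k * β := pow_succ β k
        nlinarith [h1, h2, h3, hα0, hps]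
      rw [Tminus, if_neg hcond, hSsucc k, pow_succ]; ring
  have hinv : β * ((1 - α) / β) = 1 - α := mul_div_cancel₀ _ (ne_of_gt hβ0)
  constructor
  · rw [Function.iterate_succ_apply]
    have hTp : Tplus β α ((1 - α) / β) = 0 := by
      rw [Tplus, if_neg (lt_irrefl _), hinv]; ring
    rw [hTp, hA m le_rfl, hSm]
  · rw [Function.iterate_succ_apply]
    have hTm : Tminus β α ((1 - α) / β) = 1 := by
      rw [Tminus, if_pos le_rfl, hinv]; ring
    rw [hTm, hB m le_rfl, hSm]; ring
end

section
/- Let m ≥ 2, β = β_m the multinacci number, and α ∈ (0, 2-β). The upper kneading invariant τ⁺_{β,α}(p) is a periodic sequence if and only if the lower kneading invariant τ⁻_{β,α}(p) is periodic, where p = (1-α)/β. -/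
/-- Upper kneading invariant: itinerary of `p` under `T⁺`. -/
noncomputable def tauPlus (β α : ℝ) : ℕ → Fin 2 := fun n =>
  if (Tplus β α)^[n] ((1 - α) / β) < (1 - α) / β then 0 else 1

/-- Lower kneading invariant: itinerary of `p` under `T⁻`. -/
noncomputable def tauMinus (β α : ℝ) : ℕ → Fin 2 := fun n =>
  if (Tminus β α)^[n] ((1 - α) / β) ≤ (1 - α) / β then 0 else 1

def IsPeriodic (ω : ℕ → Fin 2) : Prop := ∃ k : ℕ, 0 < k ∧ ∀ n, ω (n + k) = ω n

/-- For multinacci `β`, the upper kneading invariant is periodic iff the lower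
one is. -/
theorem kneading_periodic_iff (m : ℕ) (hm : 2 ≤ m) (β α : ℝ)
    (hβ : β ∈ Set.Ioo (1 : ℝ) 2) (hmulti : β ^ m = ∑ i ∈ Finset.range m, β ^ i)
    (hα : α ∈ Set.Ioo (0 : ℝ) (2 - β)) :
    IsPeriodic (tauPlus β α) ↔ IsPeriodic (tauMinus β α) := by
  obtain ⟨hb1, hb2⟩ := hβ
  obtain ⟨ha0, ha2⟩ := hα
  have hb0 : (0:ℝ) < β := by linarith
  have hbne : β ≠ 1 := by linarith
  have hbne0 : β ≠ 0 := ne_of_gt hb0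
  have hb1' : (0:ℝ) < β - 1 := by linarith
  have ha1 : α < 1 := by linarith
  set p : ℝ := (1 - α) / β with hp
  -- key identity : (2-β) * β^m = 1
  have hgeom : β ^ m = (β ^ m - 1) / (β - 1) :=
    hmulti.trans (geom_sum_eq hbne m)
  have hkey : (2 - β) * β ^ m = 1 := by
    have h : β ^ m * (β - 1) = β ^ m - 1 := by
      field_simp at hgeom; linarith [hgeom]
    nlinarith [h]
  -- basic facts about p
  have hp0 : 0 < p := div_pos (by linarith) hb0
  have hp1 : p < 1 := by
    rw [hp, div_lt_one hb0]; linarith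
  -- values at p
  have hTpp : Tplus β α p = 0 := by
    unfold Tplus
    rw [if_neg (lt_irrefl p), hp, mul_div_cancel₀ _ hbne0]
    ring
  have hTmp : Tminus β α p = 1 := by
    unfold Tminus
    rw [if_pos (le_refl p), hp, mul_div_cancel₀ _ hbne0]
    ring
  -- maps agree away from p
  have hagree : ∀ x : ℝ, x ≠ p → Tplus β α x = Tminus β α x := by
    intro x hx
    rcases lt_trichotomy x p with h | h | h
    · unfold Tplus Tminus; rw [if_pos h, if_pos h.le]
    · exact absurd h hx
    · unfold Tplus Tminus; rw [if_neg (not_lt.2 h.le), if_neg (not_le.2 h)]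
  -- the x-orbit formula inequalities
  have hx : ∀ k, k < m → α * ((β ^ k - 1) / (β - 1)) < p := by
    intro k hk
    have hkk : β ^ (k+1) ≤ β ^ m := pow_le_pow_right₀ hb1.le (by omega)
    have h1k : (1:ℝ) < β ^ (k+1) := one_lt_pow₀ hb1 (Nat.succ_ne_zero k)
    rw [hp, ← mul_div_assoc, div_lt_div_iff₀ hb1' hb0]
    have e : β ^ (k+1) = β ^ k * β := pow_succ β k
    nlinarith [mul_lt_mul_of_pos_right ha2 (by linarith : (0:ℝ) < β ^ (k+1) - 1),
      mul_le_mul_of_nonneg_left hkk (by linarith : (0:ℝ) ≤ 2 - β)]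
  have hy : ∀ k, k < m → p < β ^ k - (1 - α) * ((β ^ k - 1) / (β - 1)) := by
    intro k hk
    have hkk : β ^ (k+1) ≤ β ^ m := pow_le_pow_right₀ hb1.le (by omega)
    have h1k : (1:ℝ) < β ^ (k+1) := one_lt_pow₀ hb1 (Nat.succ_ne_zero k)
    have e : β ^ (k+1) = β ^ k * β := pow_succ β k
    rw [hp, div_lt_iff₀ hb0]
    have e2 : (β ^ k - (1 - α) * ((β ^ k - 1) / (β - 1))) * β
        = (β ^ k * (β-1) - (1-α) * (β ^ k - 1)) * β / (β - 1) := by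
      field_simp
    rw [e2, lt_div_iff₀ hb1']
    nlinarith [mul_le_mul_of_nonneg_left hkk (by linarith : (0:ℝ) ≤ 2 - β)]
  -- orbit formulas up to time m
  have F : ∀ k, k ≤ m →
      (Tplus β α)^[k+1] p = α * ((β ^ k - 1) / (β - 1)) ∧
      (Tminus β α)^[k+1] p = β ^ k - (1 - α) * ((β ^ k - 1) / (β - 1)) := by
    intro k
    induction k with
    | zero =>
      intro _
      constructor
      · rw [Function.iterate_one, hTpp]; norm_num
      · rw [Function.iterate_one, hTmp]; norm_num
    | succ k ih =>
      intro hk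
      have hkm : k < m := by omega
      obtain ⟨ihx, ihy⟩ := ih (by omega)
      constructor
      · rw [Function.iterate_succ_apply', ihx]
        unfold Tplus
        rw [if_pos (hx k hkm)]
        field_simp
        ring
      · rw [Function.iterate_succ_apply', ihy]
        unfold Tminus
        rw [if_neg (not_le.2 (hy k hkm))]
        field_simp
        ring
  -- merging at time m+1
  have hmerge : (Tplus β α)^[m+1] p = (Tminus β α)^[m+1] p := by
    obtain ⟨h1, h2⟩ := F m (le_refl m)
    rw [h1, h2, ← hgeom]
    ring
  -- iterates stay in [0,1]
  have hbp : β * p = 1 - α := by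
    rw [hp, mul_div_cancel₀ _ hbne0]
  have hmapsP : ∀ x : ℝ, x ∈ Set.Icc (0:ℝ) 1 → Tplus β α x ∈ Set.Icc (0:ℝ) 1 := by
    rintro x ⟨h0, h1⟩
    unfold Tplus
    rw [← hp]
    split_ifs with h
    · have h2 : β * x ≤ β * p := mul_le_mul_of_nonneg_left h.le hb0.le
      have h3 : 0 ≤ β * x := mul_nonneg hb0.le h0
      exact ⟨by linarith, by linarith⟩
    · push_neg at h
      have h2 : β * p ≤ β * x := mul_le_mul_of_nonneg_left h hb0.le
      have h3 : β * x ≤ β * 1 := mul_le_mul_of_nonneg_left h1 hb0.le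
      exact ⟨by linarith, by linarith⟩
  have hmapsM : ∀ x : ℝ, x ∈ Set.Icc (0:ℝ) 1 → Tminus β α x ∈ Set.Icc (0:ℝ) 1 := by
    rintro x ⟨h0, h1⟩
    unfold Tminus
    rw [← hp]
    split_ifs with h
    · have h2 : β * x ≤ β * p := mul_le_mul_of_nonneg_left h hb0.le
      have h3 : 0 ≤ β * x := mul_nonneg hb0.le h0
      exact ⟨by linarith, by linarith⟩
    · push_neg at h
      have h2 : β * p ≤ β * x := mul_le_mul_of_nonneg_left h.le hb0.le
      have h3 : β * x ≤ β * 1 := mul_le_mul_of_nonneg_left h1 hb0.le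
      exact ⟨by linarith, by linarith⟩
  have hpIcc : p ∈ Set.Icc (0:ℝ) 1 := ⟨hp0.le, hp1.le⟩
  -- rigidity : itinerary determines the point
  have rigid : ∀ (T : ℝ → ℝ) (D : ℝ → Prop),
      (∀ x y : ℝ, (D x ↔ D y) → T x - T y = β * (x - y)) →
      (∀ x : ℝ, x ∈ Set.Icc (0:ℝ) 1 → T x ∈ Set.Icc (0:ℝ) 1) →
      ∀ x y : ℝ, x ∈ Set.Icc (0:ℝ) 1 → y ∈ Set.Icc (0:ℝ) 1 →
      (∀ n, (D (T^[n] x) ↔ D (T^[n] y))) → x = y := by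
    intro T D hbranch hmaps x y hxI hyI hdig
    have hiter : ∀ n, T^[n] x ∈ Set.Icc (0:ℝ) 1 ∧ T^[n] y ∈ Set.Icc (0:ℝ) 1 := by
      intro n
      induction n with
      | zero => exact ⟨hxI, hyI⟩
      | succ n ih =>
        rw [Function.iterate_succ_apply', Function.iterate_succ_apply']
        exact ⟨hmaps _ ih.1, hmaps _ ih.2⟩
    have hdiff : ∀ n, T^[n] x - T^[n] y = β ^ n * (x - y) := by
      intro n
      induction n with
      | zero => simp
      | succ n ih =>
        rw [Function.iterate_succ_apply', Function.iterate_succ_apply',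
          hbranch _ _ (hdig n), ih, pow_succ]
        ring
    by_contra hne
    have hd : 0 < |x - y| := abs_pos.2 (sub_ne_zero.2 hne)
    obtain ⟨n, hn⟩ := pow_unbounded_of_one_lt (1 / |x - y|) hb1
    have h1 : |T^[n] x - T^[n] y| ≤ 1 := by
      obtain ⟨⟨ha, hb⟩, ⟨hc, hd'⟩⟩ := hiter n
      rw [abs_sub_le_iff]; constructor <;> linarith
    rw [hdiff, abs_mul, abs_pow, abs_of_pos hb0] at h1
    rw [div_lt_iff₀ hd] at hn
    nlinarith
  -- extracting the iff of conditions from equality of digits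
  have ifeq : ∀ (c c' : Prop) (_ : Decidable c) (_ : Decidable c'),
      (if c then (0:Fin 2) else 1) = (if c' then (0:Fin 2) else 1) → (c ↔ c') := by
    intro c c' _ _ h
    by_cases hc : c <;> by_cases hc' : c' <;> simp [hc, hc'] at h ⊢
  -- periodicity from returning to p
  have retP : ∀ k, 0 < k → (Tplus β α)^[k] p = p → IsPeriodic (tauPlus β α) := by
    intro k hk hret
    refine ⟨k, hk, fun n => ?_⟩
    unfold tauPlus
    rw [← hp, Function.iterate_add_apply, hret]
  have retM : ∀ k, 0 < k → (Tminus β α)^[k] p = p → IsPeriodic (tauMinus β α) := by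
    intro k hk hret
    refine ⟨k, hk, fun n => ?_⟩
    unfold tauMinus
    rw [← hp, Function.iterate_add_apply, hret]
  -- the joint evolution after merging
  have lemB : ∀ n, (Tplus β α)^[m+1+n] p = (Tminus β α)^[m+1+n] p ∨
      (IsPeriodic (tauPlus β α) ∧ IsPeriodic (tauMinus β α)) := by
    intro n
    induction n with
    | zero => exact Or.inl hmerge
    | succ n ih =>
      rcases ih with h | h
      · by_cases hv : (Tplus β α)^[m+1+n] p = p
        · right
          exact ⟨retP (m+1+n) (by omega) hv, retM (m+1+n) (by omega) (h ▸ hv)⟩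
        · left
          have e : m+1+(n+1) = (m+1+n)+1 := rfl
          rw [e, Function.iterate_succ_apply', Function.iterate_succ_apply', ← h,
            hagree _ hv]
      · exact Or.inr h
  -- iterates of p are in [0,1]
  have hiterP : ∀ n, (Tplus β α)^[n] p ∈ Set.Icc (0:ℝ) 1 := by
    intro n
    induction n with
    | zero => exact hpIcc
    | succ n ih => rw [Function.iterate_succ_apply']; exact hmapsP _ ih
  have hiterM : ∀ n, (Tminus β α)^[n] p ∈ Set.Icc (0:ℝ) 1 := by
    intro n
    induction n with
    | zero => exact hpIcc
    | succ n ih => rw [Function.iterate_succ_apply']; exact hmapsM _ ih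
  -- branch lemmas for rigidity
  have hbranchP : ∀ x y : ℝ, ((x < p) ↔ (y < p)) → Tplus β α x - Tplus β α y = β * (x - y) := by
    intro x y h
    unfold Tplus
    by_cases hxp : x < p
    · rw [if_pos hxp, if_pos (h.1 hxp)]; ring
    · rw [if_neg hxp, if_neg (fun hyp => hxp (h.2 hyp))]; ring
  have hbranchM : ∀ x y : ℝ, ((x ≤ p) ↔ (y ≤ p)) → Tminus β α x - Tminus β α y = β * (x - y) := by
    intro x y h
    unfold Tminus
    by_cases hxp : x ≤ p
    · rw [if_pos hxp, if_pos (h.1 hxp)]; ring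
    · rw [if_neg hxp, if_neg (fun hyp => hxp (h.2 hyp))]; ring
  constructor
  · rintro ⟨k, hk, hper⟩
    -- the orbit of p under T⁺ returns to p at time k
    have hret : (Tplus β α)^[k] p = p := by
      refine rigid (Tplus β α) (fun x => x < p) hbranchP hmapsP _ _ (hiterP k) hpIcc ?_
      intro n
      have h := hper n
      unfold tauPlus at h
      rw [← hp, Function.iterate_add_apply] at h
      exact ifeq _ _ _ _ h
    rcases le_or_gt k m with hkm | hkm
    · -- impossible : orbit is strictly below p up to time m
      exfalso
      obtain ⟨h1, _⟩ := F (k-1) (by omega)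
      have e : k - 1 + 1 = k := by omega
      rw [e, hret] at h1
      have := hx (k-1) (by omega)
      rw [← h1] at this
      exact lt_irrefl p this
    · rcases lemB (k - (m+1)) with h | h
      · have e : m + 1 + (k - (m+1)) = k := by omega
        rw [e] at h
        exact retM k hk (by rw [← h]; exact hret)
      · exact h.2
  · rintro ⟨k, hk, hper⟩
    have hret : (Tminus β α)^[k] p = p := by
      refine rigid (Tminus β α) (fun x => x ≤ p) hbranchM hmapsM _ _ (hiterM k) hpIcc ?_
      intro n
      have h := hper n
      unfold tauMinus at h
      rw [← hp, Function.iterate_add_apply] at h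
      exact ifeq _ _ _ _ h
    rcases le_or_gt k m with hkm | hkm
    · exfalso
      obtain ⟨_, h2⟩ := F (k-1) (by omega)
      have e : k - 1 + 1 = k := by omega
      rw [e, hret] at h2
      have := hy (k-1) (by omega)
      rw [← h2] at this
      exact lt_irrefl p this
    · rcases lemB (k - (m+1)) with h | h
      · have e : m + 1 + (k - (m+1)) = k := by omega
        rw [e] at h
        exact retP k hk (by rw [h]; exact hret)
      · exact h.1
end

section
/- Let β ∈ (1,2) be a Pisot number (an algebraic integer all of whose Galois conjugates have absolute value < 1), and let α ∈ ℚ(β) ∩ (0,2-β). Then every x ∈ ℚ(β) ∩ J_{β,α} is eventually periodic under T⁺_{β,α}: the orbit {(T⁺_{β,α})^n(x) : n ∈ ℕ} is a finite set. -/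
/-!
Write `y (n + 1) = β * y n + d n` for the orbit, with digits `d n ∈ {α, α - 1}`; everything
lives in the number field `ℚ(β)`. Under the real embedding the orbit stays in the bounded
interval `J`, which `T⁺` maps into itself. Under any other complex embedding `φ` the image of `β`
is a conjugate of modulus `< 1`, so the recursion is contracting and `φ (y n)` is bounded as well.
After clearing the denominators of `y 0` and the digits, all `y n` are algebraic integers with
uniformly bounded conjugates, and there are only finitely many of those.
-/

open Set IntermediateField

theorem le_max_of_le_mul_add {r : ℕ → ℝ} {c d : ℝ} (hc₀ : 0 ≤ c) (hc : c < 1)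
    (hr : ∀ n, r (n + 1) ≤ c * r n + d) (n : ℕ) : r n ≤ max (r 0) (d / (1 - c)) := by
  set M := max (r 0) (d / (1 - c))
  have hd : d ≤ (1 - c) * M := by
    rw [← div_le_iff₀' (by linarith)]
    exact le_max_right _ _
  induction n with
  | zero => exact le_max_left _ _
  | succ n ih => nlinarith [hr n]

theorem isIntegral_zsmul_of_sub_mul_mem {K : Type*} [CommRing K] {b : K} (hb : IsIntegral ℤ b)
    {D : Finset K} {y : ℕ → K} (hy : ∀ n, y (n + 1) - b * y n ∈ D) {m : ℤ}
    (hy₀ : IsIntegral ℤ (m • y 0)) (hD : ∀ d ∈ D, IsIntegral ℤ (m • d)) (n : ℕ) :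
    IsIntegral ℤ (m • y n) := by
  induction n with
  | zero => exact hy₀
  | succ n ih =>
    have : m • y (n + 1) = b * m • y n + m • (y (n + 1) - b * y n) := by
      rw [smul_sub, mul_smul_comm]; abel
    rw [this]
    exact (hb.mul ih).add (hD _ (hy n))

theorem bddAbove_norm_of_norm_lt_one {K A : Type*} [Ring K] [NormedRing A] {b : K} {D : Finset K}
    {y : ℕ → K} (hy : ∀ n, y (n + 1) - b * y n ∈ D) {φ : K →+* A} (hφ : ‖φ b‖ < 1) :
    BddAbove (range fun n ↦ ‖φ (y n)‖) := by
  have hrec (n : ℕ) : ‖φ (y (n + 1))‖ ≤ ‖φ b‖ * ‖φ (y n)‖ + ∑ d ∈ D, ‖φ d‖ :=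
    calc ‖φ (y (n + 1))‖ = ‖φ b * φ (y n) + φ (y (n + 1) - b * y n)‖ := by
          rw [← map_mul, ← map_add, add_sub_cancel]
      _ ≤ ‖φ b‖ * ‖φ (y n)‖ + ∑ d ∈ D, ‖φ d‖ := by
          grw [norm_add_le, norm_mul_le, Finset.single_le_sum (fun d _ ↦ norm_nonneg (φ d)) (hy n)]
  exact ⟨_, forall_mem_range.2 <| le_max_of_le_mul_add (norm_nonneg _) hφ hrec⟩

section NumberField

variable {K : Type*} [Field K] [NumberField K]

theorem finite_of_isIntegral_zsmul_of_bddAbove {S : Set K} {m : ℤ} (hm : m ≠ 0)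
    (hint : ∀ z ∈ S, IsIntegral ℤ (m • z))
    (hbdd : ∀ φ : K →+* ℂ, BddAbove ((fun z ↦ ‖φ z‖) '' S)) : S.Finite := by
  choose B hB using hbdd
  obtain ⟨C, hC⟩ := Finite.exists_le fun φ ↦ |(m : ℝ)| * B φ
  refine Finite.of_finite_image ((NumberField.Embeddings.finite_of_norm_le K ℂ C).subset ?_)
    (smul_right_injective K hm).injOn
  rintro _ ⟨z, hz, rfl⟩
  refine ⟨hint z hz, fun φ ↦ ?_⟩
  calc ‖φ (m • z)‖ = |(m : ℝ)| * ‖φ z‖ := by simp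
    _ ≤ |(m : ℝ)| * B φ := by gcongr; exact hB φ (mem_image_of_mem _ hz)
    _ ≤ C := hC φ

theorem finite_range_of_sub_mul_mem {b : K} (hb : IsIntegral ℤ b) {D : Finset K} {y : ℕ → K}
    (hy : ∀ n, y (n + 1) - b * y n ∈ D)
    (hφ : ∀ φ : K →+* ℂ, ‖φ b‖ < 1 ∨ BddAbove (range fun n ↦ ‖φ (y n)‖)) :
    (range y).Finite := by
  classical
  obtain ⟨m, hm, hmD⟩ := exists_integral_multiples ℤ ℚ (insert (y 0) D)
  refine finite_of_isIntegral_zsmul_of_bddAbove hm ?_ fun φ ↦ ?_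
  · rintro _ ⟨n, rfl⟩
    exact isIntegral_zsmul_of_sub_mul_mem hb hy (hmD _ (Finset.mem_insert_self _ _))
      (fun d hd ↦ hmD d (Finset.mem_insert_of_mem hd)) n
  · rw [← range_comp]
    exact (hφ φ).elim (bddAbove_norm_of_norm_lt_one hy) id

end NumberField

section Tplus

variable {β α : ℝ}

theorem Tplus_sub_mul_mem (β α z : ℝ) : Tplus β α z - β * z ∈ ({α, α - 1} : Set ℝ) := by
  unfold Tplus
  split_ifs
  · rw [add_sub_cancel_left]; exact .inl rfl
  · rw [add_sub_assoc, add_sub_cancel_left]; exact .inr rfl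

theorem mapsTo_Tplus {S : Type*} [SetLike S ℝ] [SubringClass S ℝ] {K : S} (hβ : β ∈ K)
    (hα : α ∈ K) : MapsTo (Tplus β α) K K := fun z hz ↦ by
  unfold Tplus
  split_ifs
  · exact add_mem (mul_mem hβ hz) hα
  · exact sub_mem (add_mem (mul_mem hβ hz) hα) (one_mem K)

theorem mapsTo_Tplus_Icc (hβ : 1 < β) (hα₀ : 0 ≤ α) (hα : α ≤ 2 - β) :
    MapsTo (Tplus β α) (Icc (-α / (β - 1)) ((1 - α) / (β - 1)))
      (Icc (-α / (β - 1)) ((1 - α) / (β - 1))) := by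
  rintro z ⟨hl, hr⟩
  have hβ₁ : 0 < β - 1 := by linarith
  rw [div_le_iff₀ hβ₁] at hl
  rw [le_div_iff₀ hβ₁] at hr
  unfold Tplus
  split_ifs with h
  · rw [lt_div_iff₀ (by linarith)] at h
    constructor
    · rw [div_le_iff₀ hβ₁]; nlinarith
    · rw [le_div_iff₀ hβ₁]; nlinarith
  · rw [not_lt, div_le_iff₀ (by linarith)] at h
    constructor
    · rw [div_le_iff₀ hβ₁]; nlinarith
    · rw [le_div_iff₀ hβ₁]; nlinarith

end Tplus

namespace IntermediateField.AdjoinSimple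

-- `[CharZero E]` rather than `[Algebra ℚ E]`: only then is the `ℚ`-algebra structure of `ℚ⟮γ⟯`
-- definitionally the one that `RingHom.toRatAlgHom` picks.
variable {E L : Type*} [Field E] [CharZero E] [Ring L] [Algebra ℚ L] {γ : E}

theorem ringHom_ext {φ ψ : ℚ⟮γ⟯ →+* L} (h : φ (gen ℚ γ) = ψ (gen ℚ γ)) : φ = ψ := by
  have : φ.toRatAlgHom = ψ.toRatAlgHom :=
    adjoin_algHom_ext ℚ fun x hx ↦ by subst hx; exact h
  exact congrArg AlgHom.toRingHom this

theorem aeval_map_gen_minpoly (φ : ℚ⟮γ⟯ →+* L) :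
    Polynomial.aeval (φ (gen ℚ γ)) (minpoly ℚ γ) = 0 := by
  rw [← minpoly_gen]
  exact minpoly.aeval_algHom ℚ φ.toRatAlgHom _

theorem norm_map_gen_lt_one_or_eq_ofReal {β : ℝ}
    (hPisot : ∀ γ : ℂ, Polynomial.aeval γ (minpoly ℚ β) = 0 → γ ≠ β → ‖γ‖ < 1)
    (φ : ℚ⟮β⟯ →+* ℂ) :
    ‖φ (gen ℚ β)‖ < 1 ∨ φ = Complex.ofRealHom.comp (algebraMap ℚ⟮β⟯ ℝ) := by
  by_cases h : φ (gen ℚ β) = β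
  · exact .inr (ringHom_ext h)
  · exact .inl (hPisot _ (aeval_map_gen_minpoly φ) h)

end IntermediateField.AdjoinSimple

/-- If `β ∈ (1,2)` is a Pisot number and `α ∈ ℚ(β) ∩ (0, 2-β)`, then every
`x ∈ ℚ(β) ∩ J_{β,α}` has a finite orbit under `T⁺_{β,α}`. -/
theorem pisot_orbit_finite (β : ℝ) (hβ : β ∈ Set.Ioo (1 : ℝ) 2)
    (hint : IsIntegral ℤ β)
    (hPisot : ∀ γ : ℂ, Polynomial.aeval γ (minpoly ℚ β) = 0 → γ ≠ (β : ℂ) →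
      ‖γ‖ < 1)
    (α : ℝ) (hα : α ∈ Set.Ioo (0 : ℝ) (2 - β))
    (hαQ : α ∈ Algebra.adjoin ℚ ({β} : Set ℝ))
    (x : ℝ) (hxQ : x ∈ Algebra.adjoin ℚ ({β} : Set ℝ))
    (hxJ : x ∈ Set.Icc (-α / (β - 1)) ((1 - α) / (β - 1))) :
    (Set.range fun n : ℕ => (Tplus β α)^[n] x).Finite := by
  classical
  have : FiniteDimensional ℚ ℚ⟮β⟯ := adjoin.finiteDimensional hint.tower_top
  have : NumberField ℚ⟮β⟯ := ⟨⟩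
  set b := AdjoinSimple.gen ℚ β
  have hb : IsIntegral ℤ b := by
    rwa [← isIntegral_algebraMap_iff (algebraMap ℚ⟮β⟯ ℝ).injective, AdjoinSimple.algebraMap_gen]
  have hαK : α ∈ ℚ⟮β⟯ := algebra_adjoin_le_adjoin ℚ _ hαQ
  have hK n : (Tplus β α)^[n] x ∈ ℚ⟮β⟯ :=
    (mapsTo_Tplus (mem_adjoin_simple_self ℚ β) hαK).iterate n (algebra_adjoin_le_adjoin ℚ _ hxQ)
  have hJ n := (mapsTo_Tplus_Icc hβ.1 hα.1.le hα.2.le).iterate n hxJ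
  let y (n : ℕ) : ℚ⟮β⟯ := ⟨_, hK n⟩
  have hy n : y (n + 1) - b * y n ∈ ({⟨α, hαK⟩, ⟨α, hαK⟩ - 1} : Finset ℚ⟮β⟯) := by
    simpa [Subtype.ext_iff, y, b, Function.iterate_succ_apply'] using
      Tplus_sub_mul_mem β α ((Tplus β α)^[n] x)
  have hφ (φ : ℚ⟮β⟯ →+* ℂ) : ‖φ b‖ < 1 ∨ BddAbove (range fun n ↦ ‖φ (y n)‖) := by
    refine (AdjoinSimple.norm_map_gen_lt_one_or_eq_ofReal hPisot φ).imp_right fun hreal ↦ ?_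
    refine ⟨max |-α / (β - 1)| |(1 - α) / (β - 1)|, forall_mem_range.2 fun n ↦ ?_⟩
    simpa [hreal] using abs_le_max_abs_abs (hJ n).1 (hJ n).2
  have := (finite_range_of_sub_mul_mem hb hy hφ).image Subtype.val
  rwa [← range_comp] at this
end

section
/- Let β ∈ (1,2) be a Pisot number and α ∈ ℚ(β) ∩ (0,2-β). Then every point that is eventually periodic under T⁺_{β,α} lies in ℚ(β); hence the set of eventually periodic points of T⁺_{β,α} equals ℚ(β) ∩ J_{β,α}. -/
open IntermediateField

section Tplus

variable {β α : ℝ}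

theorem Tplus_eq_or (x : ℝ) : Tplus β α x = β * x + α ∨ Tplus β α x = β * x + α - 1 := by
  unfold Tplus; split_ifs <;> simp

theorem Tplus_mapsTo_Icc (hβ : 1 < β) (hα0 : 0 ≤ α) (hα : α ≤ 2 - β) :
    Set.MapsTo (Tplus β α) (Set.Icc (-α / (β - 1)) ((1 - α) / (β - 1)))
      (Set.Icc (-α / (β - 1)) ((1 - α) / (β - 1))) := by
  have hb : 0 < β - 1 := by linarith
  rintro x ⟨hl, hr⟩
  rw [div_le_iff₀ hb] at hl
  rw [le_div_iff₀ hb] at hr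
  rw [Set.mem_Icc, div_le_iff₀ hb, le_div_iff₀ hb]
  unfold Tplus
  split_ifs with h
  · rw [lt_div_iff₀ (by linarith)] at h
    constructor <;> nlinarith
  · rw [not_lt, div_le_iff₀ (by linarith)] at h
    constructor <;> nlinarith

variable {S : Type*} [SetLike S ℝ] {s : S}

theorem Tplus_sub_mul_mem_s17 [SubringClass S ℝ] (hα : α ∈ s) (x : ℝ) :
    Tplus β α x - β * x ∈ s := by
  rcases Tplus_eq_or (β := β) (α := α) x with h | h <;> rw [h]
  · simpa using hα
  · convert sub_mem hα (one_mem s) using 1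
    ring

theorem Tplus_iterate_sub_pow_mul_mem [SubringClass S ℝ] (hβ : β ∈ s) (hα : α ∈ s)
    (k : ℕ) (x : ℝ) : (Tplus β α)^[k] x - β ^ k * x ∈ s := by
  induction k with
  | zero => simp
  | succ k ih =>
    rw [Function.iterate_succ_apply']
    convert add_mem (Tplus_sub_mul_mem_s17 hα ((Tplus β α)^[k] x)) (mul_mem hβ ih) using 1
    ring

theorem Tplus_iterate_mem [SubringClass S ℝ] (hβ : β ∈ s) (hα : α ∈ s) {x : ℝ} (hx : x ∈ s)
    (k : ℕ) : (Tplus β α)^[k] x ∈ s := by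
  simpa using add_mem (Tplus_iterate_sub_pow_mul_mem hβ hα k x) (mul_mem (pow_mem hβ k) hx)

theorem mem_of_Tplus_iterate_eq [SubfieldClass S ℝ] (hβ1 : 1 < β) (hβ : β ∈ s) (hα : α ∈ s)
    {x : ℝ} {m n : ℕ} (hnm : n < m) (h : (Tplus β α)^[m] x = (Tplus β α)^[n] x) : x ∈ s := by
  have hne : β ^ m - β ^ n ≠ 0 := sub_ne_zero.2 (pow_lt_pow_right₀ hβ1 hnm).ne'
  have hx : x = ((Tplus β α)^[n] x - β ^ n * x - ((Tplus β α)^[m] x - β ^ m * x)) /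
      (β ^ m - β ^ n) := by
    rw [eq_div_iff hne, h]; ring
  rw [hx]
  exact div_mem (sub_mem (Tplus_iterate_sub_pow_mul_mem hβ hα n x)
    (Tplus_iterate_sub_pow_mul_mem hβ hα m x)) (sub_mem (pow_mem hβ m) (pow_mem hβ n))

end Tplus

theorem bddAbove_range_of_le_mul_add {u : ℕ → ℝ} {a b : ℝ} (hb0 : 0 ≤ b) (hb1 : b < 1)
    (h : ∀ k, u (k + 1) ≤ b * u k + a) : BddAbove (Set.range u) := by
  refine ⟨max (u 0) (a / (1 - b)), Set.forall_mem_range.2 fun k => ?_⟩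
  induction k with
  | zero => exact le_max_left _ _
  | succ k ih =>
    have ha : a ≤ (1 - b) * max (u 0) (a / (1 - b)) := by
      rw [← div_le_iff₀' (by linarith)]; exact le_max_right _ _
    nlinarith [h k]

theorem bddAbove_range_norm_of_norm_sub_mul_le {E : Type*} [SeminormedRing E] {z : ℕ → E}
    {c : E} {A : ℝ} (hc : ‖c‖ < 1) (h : ∀ k, ‖z (k + 1) - c * z k‖ ≤ A) :
    BddAbove (Set.range fun k => ‖z k‖) :=
  bddAbove_range_of_le_mul_add (norm_nonneg c) hc fun k =>
    calc ‖z (k + 1)‖ = ‖c * z k + (z (k + 1) - c * z k)‖ := by rw [add_sub_cancel]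
      _ ≤ ‖c‖ * ‖z k‖ + A := (norm_add_le _ _).trans (add_le_add (norm_mul_le _ _) (h k))

theorem NumberField.exists_lt_eq_of_isIntegral_mul_of_bddAbove {K : Type*} [Field K]
    [NumberField K] {w : ℕ → K} {d : ℤ} (hd : d ≠ 0) (hint : ∀ k, IsIntegral ℤ (d * w k))
    (hbdd : ∀ φ : K →+* ℂ, BddAbove (Set.range fun k => ‖φ (w k)‖)) :
    ∃ m n, m < n ∧ w m = w n := by
  choose B hB using hbdd
  obtain ⟨C, hC⟩ := Finite.bddAbove_range B
  have hmem : ∀ k, (d : K) * w k ∈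
      {y : K | IsIntegral ℤ y ∧ ∀ φ : K →+* ℂ, ‖φ y‖ ≤ ‖(d : ℂ)‖ * C} := fun k =>
    ⟨hint k, fun φ => by
      rw [map_mul, map_intCast, norm_mul]
      gcongr
      exact (hB φ ⟨k, rfl⟩).trans (hC ⟨φ, rfl⟩)⟩
  obtain ⟨m, n, hmn, heq⟩ :=
    (Embeddings.finite_of_norm_le K ℂ _).exists_lt_map_eq_of_forall_mem hmem
  exact ⟨m, n, hmn, mul_left_cancel₀ (Int.cast_ne_zero.2 hd) heq⟩

theorem isIntegral_mul_of_eq_mul_add_or {R : Type*} [CommRing R] {w : ℕ → R} {b a : R} {d : ℤ}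
    (hb : IsIntegral ℤ b) (ha : IsIntegral ℤ (d * a)) (h0 : IsIntegral ℤ (d * w 0))
    (hw : ∀ k, w (k + 1) = b * w k + a ∨ w (k + 1) = b * w k + a - 1) (k : ℕ) :
    IsIntegral ℤ (d * w k) := by
  induction k with
  | zero => exact h0
  | succ k ih =>
    have hstep : IsIntegral ℤ (b * (d * w k) + d * a) := (hb.mul ih).add ha
    rcases hw k with h | h <;> rw [h]
    · convert hstep using 1; ring
    · convert hstep.sub (isIntegral_algebraMap (x := d)) using 1
      rw [eq_intCast]; ring

theorem numberField_adjoin_simple {E : Type*} [Field E] [CharZero E] {x : E}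
    (hx : IsIntegral ℚ x) : NumberField ℚ⟮x⟯ where
  to_finiteDimensional := adjoin.finiteDimensional hx

theorem ringHom_ext_adjoin_simple {E A : Type*} [Field E] [CharZero E] [DivisionRing A]
    [CharZero A] {x : E} {φ ψ : ℚ⟮x⟯ →+* A}
    (h : φ (AdjoinSimple.gen ℚ x) = ψ (AdjoinSimple.gen ℚ x)) : φ = ψ := by
  have := adjoin_algHom_ext ℚ (φ₁ := φ.toRatAlgHom) (φ₂ := ψ.toRatAlgHom) (by rintro _ rfl; exact h)
  ext y
  exact DFunLike.congr_fun this y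

theorem eq_ofReal_or_norm_gen_lt_one {β : ℝ}
    (hPisot : ∀ γ : ℂ, Polynomial.aeval γ (minpoly ℚ β) = 0 → γ ≠ (β : ℂ) → ‖γ‖ < 1)
    (φ : ℚ⟮β⟯ →+* ℂ) :
    φ = Complex.ofRealHom.comp (algebraMap ℚ⟮β⟯ ℝ) ∨ ‖φ (AdjoinSimple.gen ℚ β)‖ < 1 := by
  by_cases hφ : φ (AdjoinSimple.gen ℚ β) = β
  · exact .inl (ringHom_ext_adjoin_simple hφ)
  · have hroot := Polynomial.aeval_algHom_apply φ.toRatAlgHom (AdjoinSimple.gen ℚ β) (minpoly ℚ β)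
    rw [show Polynomial.aeval (AdjoinSimple.gen ℚ β) (minpoly ℚ β) = 0 from
      aeval_gen_minpoly ℚ β, map_zero] at hroot
    exact .inr (hPisot _ hroot hφ)

theorem exists_Tplus_iterate_eq_of_mem {β α x : ℝ} (hβ1 : 1 < β) (hint : IsIntegral ℤ β)
    (hPisot : ∀ γ : ℂ, Polynomial.aeval γ (minpoly ℚ β) = 0 → γ ≠ (β : ℂ) → ‖γ‖ < 1)
    (hα0 : 0 ≤ α) (hα2 : α ≤ 2 - β) (hαK : α ∈ ℚ⟮β⟯)
    (hx : x ∈ Set.Icc (-α / (β - 1)) ((1 - α) / (β - 1))) (hxK : x ∈ ℚ⟮β⟯) :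
    ∃ m n : ℕ, n < m ∧ (Tplus β α)^[m] x = (Tplus β α)^[n] x := by
  have := numberField_adjoin_simple hint.tower_top
  let w : ℕ → ℚ⟮β⟯ := fun k => ⟨_, Tplus_iterate_mem (mem_adjoin_simple_self ℚ β) hαK hxK k⟩
  let b := AdjoinSimple.gen ℚ β
  let a : ℚ⟮β⟯ := ⟨α, hαK⟩
  have hw : ∀ k, w (k + 1) = b * w k + a ∨ w (k + 1) = b * w k + a - 1 := fun k => by
    simp only [Subtype.ext_iff, w, Function.iterate_succ_apply']
    exact Tplus_eq_or _
  obtain ⟨d, hd, hdint⟩ := exists_integral_multiples ℤ ℚ ({w 0, a} : Finset ℚ⟮β⟯)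
  have hdw : ∀ k, IsIntegral ℤ (d * w k) :=
    isIntegral_mul_of_eq_mul_add_or
      ((isIntegral_algebraMap_iff (algebraMap ℚ⟮β⟯ ℝ).injective (x := b)).mp hint)
      (by simpa using hdint a (by simp)) (by simpa using hdint (w 0) (by simp)) hw
  have hbdd : ∀ φ : ℚ⟮β⟯ →+* ℂ, BddAbove (Set.range fun k => ‖φ (w k)‖) := by
    intro φ
    rcases eq_ofReal_or_norm_gen_lt_one hPisot φ with hreal | hcontr
    · refine ⟨max |-α / (β - 1)| |(1 - α) / (β - 1)|, Set.forall_mem_range.2 fun k => ?_⟩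
      obtain ⟨hl, hr⟩ := (Tplus_mapsTo_Icc hβ1 hα0 hα2).iterate k hx
      simpa [hreal] using abs_le_max_abs_abs hl hr
    · refine bddAbove_range_norm_of_norm_sub_mul_le (z := fun k => φ (w k)) (A := ‖φ a‖ + 1)
        hcontr fun k => ?_
      rcases hw k with h | h
      · have hφw : φ (w (k + 1)) - φ b * φ (w k) = φ a := by
          rw [h, map_add, map_mul]; ring
        rw [hφw]
        linarith
      · have hφw : φ (w (k + 1)) - φ b * φ (w k) = φ a - 1 := by
          rw [h, map_sub, map_add, map_mul, map_one]; ring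
        rw [hφw]
        simpa using norm_sub_le (φ a) 1
  obtain ⟨n, m, hnm, h⟩ := NumberField.exists_lt_eq_of_isIntegral_mul_of_bddAbove hd hdw hbdd
  exact ⟨m, n, hnm, congr_arg Subtype.val h.symm⟩

/-- For a Pisot number `β ∈ (1,2)` and `α ∈ ℚ(β) ∩ (0,2-β)`, the eventually
periodic points of `T⁺_{β,α}` in `J_{β,α}` are exactly `ℚ(β) ∩ J_{β,α}`. -/
theorem preper_eq_Qbeta (β : ℝ) (hβ : β ∈ Set.Ioo (1 : ℝ) 2)
    (hint : IsIntegral ℤ β)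
    (hPisot : ∀ γ : ℂ, Polynomial.aeval γ (minpoly ℚ β) = 0 → γ ≠ (β : ℂ) →
      ‖γ‖ < 1)
    (α : ℝ) (hα : α ∈ Set.Ioo (0 : ℝ) (2 - β))
    (hαQ : α ∈ Algebra.adjoin ℚ ({β} : Set ℝ)) :
    ∀ x ∈ Set.Icc (-α / (β - 1)) ((1 - α) / (β - 1)),
      ((∃ m n : ℕ, n < m ∧ (Tplus β α)^[m] x = (Tplus β α)^[n] x) ↔
        x ∈ Algebra.adjoin ℚ ({β} : Set ℝ)) := by
  intro x hx
  have hmem : ∀ y, y ∈ Algebra.adjoin ℚ ({β} : Set ℝ) ↔ y ∈ ℚ⟮β⟯ := fun y => by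
    rw [← adjoin_simple_toSubalgebra_of_isAlgebraic hint.tower_top.isAlgebraic, mem_toSubalgebra]
  rw [hmem] at hαQ ⊢
  constructor
  · rintro ⟨m, n, hnm, h⟩
    exact mem_of_Tplus_iterate_eq hβ.1 (mem_adjoin_simple_self ℚ β) hαQ hnm h
  · exact exists_Tplus_iterate_eq_of_mem hβ.1 hint hPisot hα.1.le hα.2.le hαQ hx
end

section
/- Let β ∈ (1,2) be an algebraic integer and α ∈ ℚ(β) ∩ (0,2-β). If every rational number in J_{β,α} is eventually periodic under T⁺_{β,α}, then every Galois conjugate γ ≠ β of β satisfies |γ| ≤ 1; i.e., β is a Pisot or Salem number. -/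
/-!
Suppose a conjugate `γ` of `β` had `|γ| > 1`, and let `φ : ℚ(β) → ℂ` send `β` to `γ`. Writing
`T⁺ x = β x + α - d(x)` with digit `d(x) ∈ {0, 1}`, the conjugate orbit `uₖ = φ(T⁺ᵏ x)` satisfies
`uₖ₊₁ = γ uₖ - (dₖ - φ α)`; if the orbit of `x` is eventually periodic, `uₖ` is bounded and
telescoping gives `φ x = ∑ (dₖ - φ α) γ^{-(k+1)}`. The digits are locally constant to the right
of every point, so the right side is right-continuous in `x`. It equals `x` at every rational of
`J_{β,α}`, so by density `φ y = y` for every eventually periodic `y ∈ ℚ(β) ∩ J_{β,α}` below the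
right end. The two points `(1 - α)/β` and `(2 - α)/β`, mapped by `T⁺` to `0` and `1`, then
force `γ = β`.
-/

open Filter Topology Set IntermediateField

def IsPreperiodicPt {α : Type*} (f : α → α) (x : α) : Prop :=
  ∃ m n : ℕ, n < m ∧ f^[m] x = f^[n] x

namespace IsPreperiodicPt

variable {α : Type*} {f : α → α} {x : α}

theorem of_apply (h : IsPreperiodicPt f (f x)) : IsPreperiodicPt f x := by
  obtain ⟨m, n, hnm, h⟩ := h
  exact ⟨m + 1, n + 1, by omega, by simpa only [Function.iterate_succ_apply] using h⟩

theorem finite_range_iterate (h : IsPreperiodicPt f x) : (range fun k ↦ f^[k] x).Finite := by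
  obtain ⟨m, n, hnm, h⟩ := h
  have hper : Function.IsPeriodicPt f (m - n) (f^[n] x) := by
    rw [Function.IsPeriodicPt, Function.IsFixedPt, ← Function.iterate_add_apply,
      Nat.sub_add_cancel hnm.le, h]
  refine ((finite_Iio m).image fun k ↦ f^[k] x).subset ?_
  rintro _ ⟨k, rfl⟩
  rcases lt_or_ge k n with hk | hk
  · exact ⟨k, by simp only [mem_Iio]; omega, rfl⟩
  · refine ⟨(k - n) % (m - n) + n, ?_, ?_⟩
    · have := Nat.mod_lt (k - n) (Nat.sub_pos_of_lt hnm)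
      simp only [mem_Iio]; omega
    · simp only [Function.iterate_add_apply, hper.iterate_mod_apply]
      rw [← Function.iterate_add_apply, Nat.sub_add_cancel hk]

end IsPreperiodicPt

theorem hasSum_mul_inv_pow_of_bddAbove {𝕜 : Type*} [NormedField 𝕜] {γ : 𝕜} (hγ : 1 < ‖γ‖)
    {u e : ℕ → 𝕜} (hrec : ∀ k, u (k + 1) = γ * u k - e k)
    (hu : BddAbove (range fun k ↦ ‖u k‖)) :
    HasSum (fun k ↦ e k * γ⁻¹ ^ (k + 1)) (u 0) := by
  obtain ⟨C, hC⟩ := hu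
  have hC' : ∀ k, ‖u k‖ ≤ C := fun k ↦ hC ⟨k, rfl⟩
  have hγ0 : γ ≠ 0 := norm_pos_iff.1 (by linarith)
  have hγinv : ‖γ⁻¹‖ < 1 := by rw [norm_inv]; exact inv_lt_one_of_one_lt₀ hγ
  have hterm : ∀ k, e k * γ⁻¹ ^ (k + 1) = u k * γ⁻¹ ^ k - u (k + 1) * γ⁻¹ ^ (k + 1) := by
    intro k
    rw [hrec, pow_succ]
    field_simp
    ring
  have hsummable : Summable fun k ↦ ‖e k * γ⁻¹ ^ (k + 1)‖ := by
    refine Summable.of_nonneg_of_le (fun _ ↦ norm_nonneg _) (fun k ↦ ?_)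
      ((summable_geometric_of_lt_one (norm_nonneg _) hγinv).mul_left (2 * C))
    rw [hterm]
    calc ‖u k * γ⁻¹ ^ k - u (k + 1) * γ⁻¹ ^ (k + 1)‖
        ≤ C * ‖γ⁻¹‖ ^ k + C * ‖γ⁻¹‖ ^ k := by
          refine (norm_sub_le _ _).trans (add_le_add ?_ ?_) <;> rw [norm_mul, norm_pow]
          · exact mul_le_mul_of_nonneg_right (hC' k) (by positivity)
          · exact mul_le_mul (hC' _) (pow_le_pow_of_le_one (norm_nonneg _) hγinv.le (by omega))
              (by positivity) ((norm_nonneg _).trans (hC' 0))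
      _ = 2 * C * ‖γ⁻¹‖ ^ k := by ring
  rw [hasSum_iff_tendsto_nat_of_summable_norm hsummable]
  simp only [hterm, Finset.sum_range_sub', pow_zero, mul_one]
  have hlim : Tendsto (fun k ↦ u k * γ⁻¹ ^ k) atTop (𝓝 0) :=
    isBoundedUnder_le_mul_tendsto_zero ⟨C, eventually_map.2 (Eventually.of_forall hC')⟩
      (tendsto_pow_atTop_nhds_zero_of_norm_lt_one hγinv)
  simpa using tendsto_const_nhds.sub hlim

theorem eq_of_continuousWithinAt_Ici_of_eq_ratCast {E : Type*} [TopologicalSpace E] [T2Space E]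
    {f g : ℝ → E} {y r : ℝ} (hyr : y < r) (hf : ContinuousWithinAt f (Ici y) y)
    (hg : ContinuousWithinAt g (Ici y) y) (hfg : ∀ q : ℚ, (q : ℝ) ∈ Ioo y r → f q = g q) :
    f y = g y := by
  obtain ⟨u, -, hu, hlim⟩ := Dense.exists_seq_strictAnti_tendsto_of_lt Rat.denseRange_cast hyr
  have hlim' : Tendsto u atTop (𝓝[≥] y) :=
    tendsto_nhdsWithin_iff.2 ⟨hlim, Eventually.of_forall fun n ↦ (hu n).1.1.le⟩
  refine tendsto_nhds_unique (hf.tendsto.comp hlim') ((hg.tendsto.comp hlim').congr fun n ↦ ?_)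
  obtain ⟨hn, q, hq⟩ := hu n
  simp only [Function.comp_apply, ← hq] at hn ⊢
  exact (hfg q hn).symm

noncomputable def tplusDigit (β α x : ℝ) : ℕ := if x < (1 - α) / β then 0 else 1

section Tplus

variable {β α : ℝ}

theorem Tplus_eq (β α x : ℝ) : Tplus β α x = β * x + α - tplusDigit β α x := by
  unfold Tplus tplusDigit
  split_ifs <;> simp

theorem tplusDigit_le_one (β α x : ℝ) : tplusDigit β α x ≤ 1 := by
  unfold tplusDigit
  split_ifs <;> simp

theorem eventually_tplusDigit_nhdsGE (β α x : ℝ) :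
    ∀ᶠ w in 𝓝[≥] x, tplusDigit β α w = tplusDigit β α x := by
  unfold tplusDigit
  by_cases hx : x < (1 - α) / β
  · filter_upwards [nhdsWithin_le_nhds (Iio_mem_nhds hx)] with w hw
    rw [if_pos (mem_Iio.1 hw), if_pos hx]
  · filter_upwards [self_mem_nhdsWithin] with w hw
    rw [if_neg hx, if_neg (not_lt.2 ((not_lt.1 hx).trans hw))]

theorem tendsto_Tplus_nhdsGE (hβ : 0 ≤ β) (x : ℝ) :
    Tendsto (Tplus β α) (𝓝[≥] x) (𝓝[≥] (Tplus β α x)) := by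
  have hT : (fun w ↦ β * w + α - tplusDigit β α x) =ᶠ[𝓝[≥] x] Tplus β α := by
    filter_upwards [eventually_tplusDigit_nhdsGE β α x] with w hw
    rw [Tplus_eq, hw]
  refine Tendsto.congr' hT (tendsto_nhdsWithin_iff.2 ⟨?_, ?_⟩)
  · rw [Tplus_eq]
    exact ((continuous_const.mul continuous_id).add continuous_const).sub continuous_const
      |>.continuousWithinAt
  · filter_upwards [self_mem_nhdsWithin] with w (hw : x ≤ w)
    rw [mem_Ici, Tplus_eq]
    gcongr

theorem tendsto_iterate_Tplus_nhdsGE (hβ : 0 ≤ β) (n : ℕ) (x : ℝ) :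
    Tendsto (Tplus β α)^[n] (𝓝[≥] x) (𝓝[≥] ((Tplus β α)^[n] x)) := by
  induction n generalizing x with
  | zero => exact tendsto_id
  | succ n ih =>
    rw [Function.iterate_succ_apply]
    exact ih _ |>.comp (tendsto_Tplus_nhdsGE hβ x)

theorem iterate_Tplus_mem {S : Type*} [SetLike S ℝ] [SubringClass S ℝ] {K : S} (hβ : β ∈ K)
    (hα : α ∈ K) {x : ℝ} (hx : x ∈ K) (n : ℕ) : (Tplus β α)^[n] x ∈ K := by
  induction n with
  | zero => exact hx
  | succ n ih =>
    rw [Function.iterate_succ_apply', Tplus_eq]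
    exact sub_mem (add_mem (mul_mem hβ ih) hα) (natCast_mem K _)

theorem Tplus_add_one_sub_div (hβ : 0 < β) {z : ℝ} (hz : 0 ≤ z) :
    Tplus β α ((z + 1 - α) / β) = z := by
  have hcut : ¬ (z + 1 - α) / β < (1 - α) / β := by
    rw [not_lt]; gcongr; linarith
  rw [Tplus, if_neg hcut]
  field_simp
  ring

end Tplus

/-- The conjugate, under `β ↦ γ`, `α ↦ a`, of the expansion `x = ∑ (dₖ - α) β^{-(k+1)}` given by
the `T⁺_{β,α}`-digits of `x`. -/
noncomputable def tplusExpansion (β α : ℝ) (γ a : ℂ) (x : ℝ) : ℂ :=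
  ∑' k, ((tplusDigit β α ((Tplus β α)^[k] x) : ℂ) - a) * γ⁻¹ ^ (k + 1)

theorem continuousWithinAt_tplusExpansion {β : ℝ} (hβ : 0 ≤ β) (α : ℝ) {γ : ℂ} (hγ : 1 < ‖γ‖)
    (a : ℂ) (x : ℝ) : ContinuousWithinAt (tplusExpansion β α γ a) (Ici x) x := by
  have hγinv : ‖γ⁻¹‖ < 1 := by rw [norm_inv]; exact inv_lt_one_of_one_lt₀ hγ
  refine tendsto_tsum_of_dominated_convergence (bound := fun k ↦ (1 + ‖a‖) * ‖γ⁻¹‖ ^ k)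
    ((summable_geometric_of_lt_one (norm_nonneg _) hγinv).mul_left _) (fun k ↦ ?_)
    (Eventually.of_forall fun w k ↦ ?_)
  · refine tendsto_const_nhds.congr' ?_
    filter_upwards [(tendsto_iterate_Tplus_nhdsGE hβ k x).eventually
      (eventually_tplusDigit_nhdsGE β α _)] with w hw
    rw [hw]
  · rw [norm_mul, norm_pow]
    refine mul_le_mul ((norm_sub_le _ _).trans ?_) (pow_le_pow_of_le_one (norm_nonneg _) hγinv.le
      (by omega)) (by positivity) (by positivity)
    gcongr
    simpa using tplusDigit_le_one β α _

section Conjugate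

variable {S : Type*} [SetLike S ℝ] {K : S} {β α : ℝ}

theorem tplusExpansion_eq_of_isPreperiodicPt [SubringClass S ℝ] (φ : K →+* ℂ) (hβK : β ∈ K)
    (hαK : α ∈ K) (hγ : 1 < ‖φ ⟨β, hβK⟩‖) {x : ℝ} (hx : x ∈ K)
    (hpx : IsPreperiodicPt (Tplus β α) x) :
    tplusExpansion β α (φ ⟨β, hβK⟩) (φ ⟨α, hαK⟩) x = φ ⟨x, hx⟩ := by
  let orbit : ℕ → K := fun k ↦ ⟨(Tplus β α)^[k] x, iterate_Tplus_mem hβK hαK hx k⟩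
  have horbit : ∀ k, orbit (k + 1) =
      ⟨β, hβK⟩ * orbit k + ⟨α, hαK⟩ - tplusDigit β α ((Tplus β α)^[k] x) := by
    intro k
    ext
    simp [orbit, Function.iterate_succ_apply', Tplus_eq]
  have hfin : (range orbit).Finite :=
    (hpx.finite_range_iterate.preimage Subtype.val_injective.injOn).subset
      (by rintro _ ⟨k, rfl⟩; exact ⟨k, rfl⟩)
  refine (hasSum_mul_inv_pow_of_bddAbove hγ (u := fun k ↦ φ (orbit k))
    (fun k ↦ ?_) ?_).tsum_eq
  · rw [horbit, map_sub, map_add, map_mul, map_natCast]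
    ring
  · exact (hfin.image fun y ↦ ‖φ y‖).bddAbove.mono
      (by rintro _ ⟨k, rfl⟩; exact ⟨orbit k, ⟨k, rfl⟩, rfl⟩)

theorem map_eq_self_of_isPreperiodicPt [SubfieldClass S ℝ] (φ : K →+* ℂ) (hβK : β ∈ K)
    (hαK : α ∈ K) (hβ0 : 0 ≤ β) (hγ : 1 < ‖φ ⟨β, hβK⟩‖) {y r : ℝ} (hyr : y < r)
    (hper : ∀ q : ℚ, (q : ℝ) ∈ Ioo y r → IsPreperiodicPt (Tplus β α) q) (hy : y ∈ K)
    (hpy : IsPreperiodicPt (Tplus β α) y) : φ ⟨y, hy⟩ = y := by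
  rw [← tplusExpansion_eq_of_isPreperiodicPt φ hβK hαK hγ hy hpy]
  refine eq_of_continuousWithinAt_Ici_of_eq_ratCast hyr
    (continuousWithinAt_tplusExpansion hβ0 α hγ _ y)
    Complex.continuous_ofReal.continuousWithinAt fun q hq ↦ ?_
  have hqK : (q : ℝ) ∈ K := SubfieldClass.ratCast_mem K q
  rw [tplusExpansion_eq_of_isPreperiodicPt φ hβK hαK hγ hqK (hper q hq),
    show (⟨q, hqK⟩ : K) = q from rfl, map_ratCast]
  simp

theorem map_mul_preimage_eq [SubfieldClass S ℝ] (φ : K →+* ℂ) (hβK : β ∈ K) (hαK : α ∈ K)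
    (hβ : β ∈ Ioo 1 2) (hα : α ∈ Ioo 0 (2 - β)) (hγ : 1 < ‖φ ⟨β, hβK⟩‖)
    (hper : ∀ q : ℚ, (q : ℝ) ∈ Icc (-α / (β - 1)) ((1 - α) / (β - 1)) →
      IsPreperiodicPt (Tplus β α) q)
    (z : ℚ) (hz0 : 0 ≤ (z : ℝ)) (hz1 : (z : ℝ) ≤ 1) :
    φ ⟨β, hβK⟩ * (((z + 1 - α) / β : ℝ) : ℂ) = z + 1 - φ ⟨α, hαK⟩ := by
  obtain ⟨hβ1, hβ2⟩ := hβ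
  obtain ⟨hα0, hα2⟩ := hα
  have hl : -α / (β - 1) < 0 := div_neg_of_neg_of_pos (by linarith) (by linarith)
  have hr : 1 < (1 - α) / (β - 1) := by rw [lt_div_iff₀ (by linarith)]; linarith
  have hyK : ((z + 1 - α) / β : ℝ) ∈ K :=
    div_mem (sub_mem (add_mem (SubfieldClass.ratCast_mem K z) (one_mem K)) hαK) hβK
  have hy0 : 0 < (z + 1 - α) / β := div_pos (by linarith) (by linarith)
  have hyr : (z + 1 - α) / β < (1 - α) / (β - 1) := by
    rw [div_lt_div_iff₀ (by linarith) (by linarith)]; nlinarith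
  have hpy : IsPreperiodicPt (Tplus β α) ((z + 1 - α) / β) :=
    .of_apply <| by
      rw [Tplus_add_one_sub_div (by linarith) hz0]
      exact hper z ⟨by linarith, by linarith⟩
  have hφy := map_eq_self_of_isPreperiodicPt φ hβK hαK (by linarith) hγ hyr
    (fun q hq ↦ hper q ⟨by linarith [hq.1], hq.2.le⟩) hyK hpy
  have hβy : (⟨β, hβK⟩ * ⟨_, hyK⟩ : K) = z + 1 - ⟨α, hαK⟩ := by
    ext
    push_cast
    field_simp
  simpa only [map_mul, map_sub, map_add, map_one, map_ratCast, hφy] using congrArg φ hβy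

end Conjugate

/-- If every rational in `J_{β,α}` is eventually periodic under `T⁺_{β,α}`,
then every Galois conjugate `γ ≠ β` of `β` has modulus at most `1`; that is,
`β` is a Pisot or Salem number. -/
theorem rationals_preperiodic_implies_pisot_or_salem (β : ℝ)
    (hβ : β ∈ Set.Ioo (1 : ℝ) 2) (hint : IsIntegral ℤ β)
    (α : ℝ) (hα : α ∈ Set.Ioo (0 : ℝ) (2 - β))
    (hαQ : α ∈ Algebra.adjoin ℚ ({β} : Set ℝ))
    (hper : ∀ x : ℚ, (x : ℝ) ∈ Set.Icc (-α / (β - 1)) ((1 - α) / (β - 1)) →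
      ∃ m n : ℕ, n < m ∧ (Tplus β α)^[m] (x : ℝ) = (Tplus β α)^[n] (x : ℝ)) :
    ∀ γ : ℂ, Polynomial.aeval γ (minpoly ℚ β) = 0 → γ ≠ (β : ℂ) →
      ‖γ‖ ≤ 1 := by
  intro γ hroot hγβ
  by_contra! hγ
  have hβQ : IsIntegral ℚ β := hint.tower_top
  set φ := (algHomAdjoinIntegralEquiv ℚ hβQ).symm
    ⟨γ, Polynomial.mem_aroots.2 ⟨minpoly.ne_zero hβQ, hroot⟩⟩
  have hβK : β ∈ ℚ⟮β⟯ := mem_adjoin_simple_self ℚ β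
  have hαK : α ∈ ℚ⟮β⟯ := algebra_adjoin_le_adjoin ℚ {β} hαQ
  have hφβ : φ ⟨β, hβK⟩ = γ := algHomAdjoinIntegralEquiv_symm_apply_gen ℚ hβQ _
  -- `φ` fixes `(1 - α) / β` and `(2 - α) / β`, which differ by `1 / β`
  have h0 := map_mul_preimage_eq (φ : ℚ⟮β⟯ →+* ℂ) hβK hαK hβ hα (hφβ ▸ hγ) hper 0
    (by simp) (by simp)
  have h1 := map_mul_preimage_eq (φ : ℚ⟮β⟯ →+* ℂ) hβK hαK hβ hα (hφβ ▸ hγ) hper 1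
    (by simp) (by simp)
  have hβ0 : (β : ℂ) ≠ 0 := Complex.ofReal_ne_zero.2 (by linarith [hβ.1])
  simp only [RingHom.coe_coe, hφβ] at h0 h1
  push_cast at h0 h1
  field_simp at h0 h1
  exact hγβ (by linear_combination h1 - h0)
end

section
/- Fix β ∈ (1,2), an algebraic integer of degree d with conjugates γ_1 = β, γ_2, ..., γ_d, and fix α ∈ ℚ(β) ∩ (0,2-β) and x ∈ ℚ(β) ∩ J_{β,α}. With r^{(n)} ∈ ℤ^d the integer vectors such that (T⁺_{β,α})^n(x) = (q̂q)^{-1} Σ_{k=1}^d r_k^{(n)} β^{-k}, and ρ_i^{(n)} := q^{-1} Σ_{k=1}^d r_k^{(n)} γ_i^{-k}, the following are equivalent: (i) x is eventually periodic under T⁺_{β,α}; (ii) sup over n and i of |ρ_i^{(n)}| is finite; (iii) sup over n and k of |r_k^{(n)}| is finite. -/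
/-!
Since `β⁻¹, …, β⁻ᵈ` are linearly independent over `ℚ`, the orbit point `Tⁿ x` determines the
integer vector `r⁽ⁿ⁾`. Hence `x` is eventually periodic iff `n ↦ r⁽ⁿ⁾` takes finitely many values,
iff it is bounded, the integer lattice being discrete. Finally `ρ⁽ⁿ⁾ = q⁻¹ V r⁽ⁿ⁾` with
`V = (γᵢ^{-k})` an invertible Vandermonde-type matrix (the conjugates are distinct and nonzero), so
`ρ⁽ⁿ⁾` is bounded iff `r⁽ⁿ⁾` is.
-/

open Set Bornology Matrix

theorem Function.finite_range_iterate_iff {α : Type*} {f : α → α} {x : α} :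
    (range fun n => f^[n] x).Finite ↔ ∃ m n, n < m ∧ f^[m] x = f^[n] x := by
  refine ⟨fun h => ?_, ?_⟩
  · obtain ⟨n, m, hnm, heq⟩ :=
      h.exists_lt_map_eq_of_forall_mem (f := fun n => f^[n] x) mem_range_self
    exact ⟨m, n, hnm, heq.symm⟩
  · rintro ⟨m, n, hnm, heq⟩
    have hper : IsPeriodicPt f (m - n) (f^[n] x) := by
      rw [IsPeriodicPt, IsFixedPt, ← iterate_add_apply, Nat.sub_add_cancel hnm.le, heq]
    refine ((finite_Iio m).image fun k => f^[k] x).subset ?_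
    rintro _ ⟨j, rfl⟩
    rcases lt_or_ge j n with hj | hj
    · exact ⟨j, mem_Iio.2 (hj.trans hnm), rfl⟩
    · have := Nat.mod_lt (j - n) (Nat.sub_pos_of_lt hnm)
      refine ⟨(j - n) % (m - n) + n, mem_Iio.2 (by omega), ?_⟩
      change f^[_ + n] x = f^[j] x
      rw [iterate_add_apply, hper.iterate_mod_apply, ← iterate_add_apply, Nat.sub_add_cancel hj]

theorem isBounded_range_iff_forall_norm_le_pi {α ι E : Type*} [Fintype ι]
    [SeminormedAddCommGroup E] (u : α → ι → E) :
    IsBounded (range u) ↔ ∃ C, ∀ a i, ‖u a i‖ ≤ C := by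
  simp only [isBounded_iff_forall_norm_le, forall_mem_range]
  refine ⟨fun ⟨C, hC⟩ => ⟨C, fun a i => (norm_le_pi_norm (u a) i).trans (hC a)⟩,
    fun ⟨C, hC⟩ => ⟨max C 0, fun a => ?_⟩⟩
  exact (pi_norm_le_iff_of_nonneg (le_max_right C 0)).2 fun i => (hC a i).trans (le_max_left C 0)

theorem Set.finite_iff_isBounded {X : Type*} [PseudoMetricSpace X] [ProperSpace X]
    [DiscreteTopology X] {s : Set X} : s.Finite ↔ IsBounded s :=
  ⟨Set.Finite.isBounded, fun h => by
    simpa using Metric.finite_isBounded_inter_isClosed IsDiscrete.univ h isClosed_univ⟩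

open scoped Matrix.Norms.Operator in
theorem Matrix.isBounded_range_mulVec {R m n α : Type*} [NonUnitalSeminormedRing R] [Fintype m]
    [Fintype n] (A : Matrix m n R) {u : α → n → R} (hu : IsBounded (range u)) :
    IsBounded (range fun a => A *ᵥ u a) := by
  obtain ⟨C, hC⟩ := isBounded_iff_forall_norm_le.1 hu
  refine isBounded_iff_forall_norm_le.2 ⟨‖A‖ * C, forall_mem_range.2 fun a => ?_⟩
  exact (linfty_opNorm_mulVec A (u a)).trans (by gcongr; exact hC _ (mem_range_self a))

theorem Matrix.isBounded_range_mulVec_iff {R n α : Type*} [SeminormedCommRing R] [Fintype n]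
    [DecidableEq n] {M : Matrix n n R} (hM : IsUnit M.det) (u : α → n → R) :
    IsBounded (range fun a => M *ᵥ u a) ↔ IsBounded (range u) :=
  ⟨fun h => by simpa [mulVec_mulVec, nonsing_inv_mul _ hM] using M⁻¹.isBounded_range_mulVec h,
    M.isBounded_range_mulVec⟩

def Matrix.negVandermonde {K : Type*} [Field K] {d : ℕ} (γ : Fin d → K) :
    Matrix (Fin d) (Fin d) K :=
  .of fun i k => γ i ^ (-((k : ℕ) + 1 : ℤ))

theorem Matrix.negVandermonde_eq {K : Type*} [Field K] {d : ℕ} (γ : Fin d → K) :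
    negVandermonde γ = diagonal γ⁻¹ * vandermonde γ⁻¹ := by
  ext i k
  rw [diagonal_mul]
  simp only [negVandermonde, vandermonde, of_apply, Pi.inv_apply]
  rw [show -((k : ℕ) + 1 : ℤ) = -((k + 1 : ℕ) : ℤ) by push_cast; ring, _root_.zpow_neg,
    zpow_natCast, ← inv_pow, pow_succ']

theorem Matrix.negVandermonde_mulVec {K : Type*} [Field K] {d : ℕ} (γ : Fin d → K)
    (v : Fin d → K) (i : Fin d) :
    (negVandermonde γ *ᵥ v) i = ∑ k, v k * γ i ^ (-((k : ℕ) + 1 : ℤ)) := by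
  simp only [mulVec, dotProduct, negVandermonde, of_apply, mul_comm]

theorem Matrix.isUnit_det_negVandermonde {K : Type*} [Field K] {d : ℕ} {γ : Fin d → K}
    (hinj : Function.Injective γ) (h0 : ∀ i, γ i ≠ 0) : IsUnit (negVandermonde γ).det := by
  rw [negVandermonde_eq, det_mul, det_diagonal, isUnit_iff_ne_zero]
  refine mul_ne_zero (Finset.prod_ne_zero_iff.2 fun i _ => inv_ne_zero (h0 i))
    (det_vandermonde_ne_zero_iff.2 fun i j h => hinj (inv_injective h))

theorem ne_zero_of_aeval_minpoly_eq_zero {K L A : Type*} [Field K] [Field L] [Algebra K L]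
    [CommRing A] [IsDomain A] [Algebra K A] {β : L} (hβ : β ≠ 0)
    (hdeg : 0 < (minpoly K β).natDegree) {γ : A} (hγ : Polynomial.aeval γ (minpoly K β) = 0) :
    γ ≠ 0 := by
  have hint : IsIntegral K β := by
    by_contra h
    simp [minpoly.eq_zero h] at hdeg
  rintro rfl
  rw [← Polynomial.coeff_zero_eq_aeval_zero', map_eq_zero_iff _ (algebraMap K A).injective] at hγ
  exact minpoly.coeff_zero_ne_zero hint hβ hγ

theorem linearIndependent_zpow_neg_succ {K L : Type*} [Field K] [Field L] [Algebra K L] {β : L}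
    (hβ : β ≠ 0) {d : ℕ} (hd : (minpoly K β).natDegree = d) :
    LinearIndependent K fun k : Fin d => β ^ (-((k : ℕ) + 1 : ℤ)) := by
  subst hd
  set c := β ^ (-((minpoly K β).natDegree : ℤ))
  have hrev := (linearIndependent_pow (K := K) β).comp Fin.rev Fin.rev_injective
  have hshift : (fun k : Fin (minpoly K β).natDegree => β ^ (-((k : ℕ) + 1 : ℤ))) =
      LinearMap.mulLeft K c ∘ (fun i : Fin _ => β ^ (i : ℕ)) ∘ Fin.rev := by
    ext k
    simp only [Function.comp_apply, LinearMap.mulLeft_apply, Fin.val_rev, c]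
    rw [← zpow_natCast, ← zpow_add₀ hβ]
    congr 1
    omega
  rw [hshift]
  exact hrev.map' _ (LinearMap.ker_eq_bot.2 (mul_right_injective₀ (zpow_ne_zero _ hβ)))

theorem injective_sum_intCast_mul_zpow_neg_succ {L : Type*} [Field L] [CharZero L] {β : L}
    (hβ : β ≠ 0) {d : ℕ} (hd : (minpoly ℚ β).natDegree = d) :
    Function.Injective fun v : Fin d → ℤ => ∑ k, (v k : L) * β ^ (-((k : ℕ) + 1 : ℤ)) := by
  intro v w h
  have hli := (linearIndependent_zpow_neg_succ hβ hd).restrict_scalars' ℤ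
  funext k
  exact Fintype.linearIndependent_iffₛ.1 hli v w (by simpa only [zsmul_eq_mul] using h) k

theorem tfae_preperiodic_bounded_general (β : ℝ) (hβ : β ∈ Set.Ioo (1 : ℝ) 2)
    (d : ℕ) (hd : (minpoly ℚ β).natDegree = d)
    (γ : Fin d → ℂ) (hγinj : Function.Injective γ)
    (hγroot : ∀ i, Polynomial.aeval (γ i) (minpoly ℚ β) = 0)
    (α x : ℝ)
    (q : ℕ) (hq : 0 < q)
    (qhat : ℕ) (hqhat : 0 < qhat)
    (r : ℕ → Fin d → ℤ)
    (hr : ∀ n : ℕ, (Tplus β α)^[n] x =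
      ((qhat * q : ℕ) : ℝ)⁻¹ * ∑ k : Fin d, (r n k : ℝ) * β ^ (-((k : ℕ) + 1 : ℤ))) :
    ((∃ m n : ℕ, n < m ∧ (Tplus β α)^[m] x = (Tplus β α)^[n] x) ↔
      (∃ C : ℝ, ∀ (n : ℕ) (i : Fin d),
        ‖(q : ℂ)⁻¹ * ∑ k : Fin d, (r n k : ℂ) * (γ i) ^ (-((k : ℕ) + 1 : ℤ))‖ ≤ C)) ∧
    ((∃ m n : ℕ, n < m ∧ (Tplus β α)^[m] x = (Tplus β α)^[n] x) ↔
      (∃ C : ℝ, ∀ (n : ℕ) (k : Fin d), |r n k| ≤ C)) := by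
  have hβ0 : β ≠ 0 := (zero_lt_one.trans hβ.1).ne'
  have hc : ((qhat * q : ℕ) : ℝ) ≠ 0 := by positivity
  have hcoord := (mul_right_injective₀ (inv_ne_zero hc)).comp
    (injective_sum_intCast_mul_zpow_neg_succ hβ0 hd)
  have hperiodic : (∃ m n : ℕ, n < m ∧ (Tplus β α)^[m] x = (Tplus β α)^[n] x) ↔
      (range r).Finite := by
    rw [← Function.finite_range_iterate_iff, funext hr, ← finite_image_iff hcoord.injOn,
      ← range_comp]
    rfl
  have hbounded : (range r).Finite ↔ ∃ C : ℝ, ∀ n k, ‖r n k‖ ≤ C := by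
    rw [finite_iff_isBounded, isBounded_range_iff_forall_norm_le_pi]
  have hM : IsUnit ((q : ℂ)⁻¹ • negVandermonde γ).det := by
    rw [det_smul]
    exact ((inv_ne_zero (by exact_mod_cast hq.ne')).isUnit.pow _).mul <|
      isUnit_det_negVandermonde hγinj fun i =>
        ne_zero_of_aeval_minpoly_eq_zero hβ0 (hd ▸ i.pos) (hγroot i)
  have hconj := isBounded_range_mulVec_iff hM fun n k => (r n k : ℂ)
  simp only [isBounded_range_iff_forall_norm_le_pi, smul_mulVec, Pi.smul_apply, smul_eq_mul,
    negVandermonde_mulVec, Complex.norm_intCast] at hconj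
  simp only [Int.norm_eq_abs, Int.cast_abs] at hbounded ⊢
  exact ⟨hperiodic.trans (hbounded.trans hconj.symm), hperiodic.trans hbounded⟩

/-- Equivalence of: eventual periodicity of `x`; boundedness of the conjugate
quantities `ρᵢ⁽ⁿ⁾`; boundedness of the integer vectors `r⁽ⁿ⁾`. -/
theorem tfae_preperiodic_bounded (β : ℝ) (hβ : β ∈ Set.Ioo (1 : ℝ) 2)
    (hint : IsIntegral ℤ β) (d : ℕ) (hd : (minpoly ℚ β).natDegree = d)
    (hd0 : 0 < d) (γ : Fin d → ℂ) (hγinj : Function.Injective γ)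
    (hγ0 : γ ⟨0, hd0⟩ = (β : ℂ))
    (hγroot : ∀ i, Polynomial.aeval (γ i) (minpoly ℚ β) = 0)
    (α x : ℝ) (hα : α ∈ Set.Ioo (0 : ℝ) (2 - β))
    (hxJ : x ∈ Set.Icc (-α / (β - 1)) ((1 - α) / (β - 1)))
    (p : Fin d → ℤ) (q : ℕ) (hq : 0 < q)
    (hx : x = (q : ℝ)⁻¹ * ∑ i : Fin d, (p i : ℝ) * β ^ (i : ℕ))
    (phat : Fin d → ℤ) (qhat : ℕ) (hqhat : 0 < qhat)
    (hαrep : α = (qhat : ℝ)⁻¹ * ∑ i : Fin d, (phat i : ℝ) * β ^ (i : ℕ))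
    (r : ℕ → Fin d → ℤ)
    (hr : ∀ n : ℕ, (Tplus β α)^[n] x =
      ((qhat * q : ℕ) : ℝ)⁻¹ * ∑ k : Fin d, (r n k : ℝ) * β ^ (-((k : ℕ) + 1 : ℤ))) :
    ((∃ m n : ℕ, n < m ∧ (Tplus β α)^[m] x = (Tplus β α)^[n] x) ↔
      (∃ C : ℝ, ∀ (n : ℕ) (i : Fin d),
        ‖(q : ℂ)⁻¹ * ∑ k : Fin d, (r n k : ℂ) * (γ i) ^ (-((k : ℕ) + 1 : ℤ))‖ ≤ C)) ∧
    ((∃ m n : ℕ, n < m ∧ (Tplus β α)^[m] x = (Tplus β α)^[n] x) ↔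
      (∃ C : ℝ, ∀ (n : ℕ) (k : Fin d), |r n k| ≤ C)) :=
  tfae_preperiodic_bounded_general β hβ d hd γ hγinj hγroot α x q hq qhat hqhat r hr
end
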